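/- arXiv:2412.11806 — 2 statements merged into one kernel-verified Lean document; each statement's English description precedes it below -/
import Mathlib

section
/- For the sequence x_0 = 1, x_{k+1} = x_k * exp(1/x_k), the reciprocal sequence y_k = 1/x_k satisfies y_{k+1} = y_k * exp(-y_k), and x_k / k → 1 as k → ∞. -/
open Filter Real Topology

/-! The increments `x (k + 1) - x k = x (exp (1 / x) - 1)` are difference quotients of `exp` at `0`
with step `1 / x k`. Since `x (k + 1) ≥ x k + 1`, the sequence tends to infinity, the step tends to
`0`, so the increments tend to `exp' 0 = 1`, and Cesàro averaging gives `x k / k → 1`. -/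

theorem one_div_mul_exp_one_div (a : ℝ) : 1 / (a * exp (1 / a)) = 1 / a * exp (-(1 / a)) := by
  rw [one_div, one_div, mul_inv, exp_neg]

theorem add_one_le_mul_exp_one_div {a : ℝ} (ha : 0 < a) : a + 1 ≤ a * exp (1 / a) := by
  calc a + 1 = a * (1 / a + 1) := by rw [mul_add, mul_one_div_cancel ha.ne', mul_one, add_comm]
    _ ≤ a * exp (1 / a) := by gcongr; exact add_one_le_exp _

theorem tendsto_mul_exp_one_div_sub_self :
    Tendsto (fun a : ℝ => a * exp (1 / a) - a) atTop (𝓝 1) := by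
  have hslope : Tendsto (slope exp 0) (𝓝[≠] 0) (𝓝 1) := by
    simpa using hasDerivAt_iff_tendsto_slope.mp (hasDerivAt_exp 0)
  have hstep : Tendsto (fun a : ℝ => a⁻¹) atTop (𝓝[≠] 0) :=
    tendsto_inv_atTop_nhdsGT_zero.mono_right (nhdsWithin_mono _ fun _ h => ne_of_gt h)
  refine (hslope.comp hstep).congr fun a => ?_
  simp only [Function.comp_apply, slope_def_field, exp_zero, sub_zero, div_inv_eq_mul, one_div]
  ring

theorem Filter.Tendsto.div_natCast_of_tendsto_sub {u : ℕ → ℝ} {l : ℝ}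
    (h : Tendsto (fun n => u (n + 1) - u n) atTop (𝓝 l)) :
    Tendsto (fun n : ℕ => u n / n) atTop (𝓝 l) := by
  have hinv : Tendsto (fun n : ℕ => (n : ℝ)⁻¹) atTop (𝓝 0) :=
    tendsto_inv_atTop_zero.comp tendsto_natCast_atTop_atTop
  have hlim := h.cesaro.add (hinv.mul_const (u 0))
  rw [zero_mul, add_zero] at hlim
  refine hlim.congr fun n => ?_
  rw [Finset.sum_range_sub u n]
  ring

theorem natCast_add_one_le_of_eq_mul_exp_one_div {x : ℕ → ℝ} (h0 : 1 ≤ x 0)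
    (hrec : ∀ k, x (k + 1) = x k * exp (1 / x k)) (k : ℕ) : (k : ℝ) + 1 ≤ x k := by
  induction k with
  | zero => simpa using h0
  | succ k ih =>
    have hpos : 0 < x k := ih.trans_lt' (by positivity)
    push_cast
    linarith [hrec k ▸ add_one_le_mul_exp_one_div hpos]

theorem stmt_6 (x : ℕ → ℝ)
    (h0 : x 0 = 1)
    (hrec : ∀ k, x (k + 1) = x k * Real.exp (1 / x k)) :
    (∀ k, 1 / x (k + 1) = (1 / x k) * Real.exp (-(1 / x k))) ∧
      Tendsto (fun k : ℕ => x k / (k : ℝ)) atTop (nhds 1) := by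
  refine ⟨fun k => hrec k ▸ one_div_mul_exp_one_div (x k), ?_⟩
  have hx : Tendsto x atTop atTop :=
    tendsto_atTop_mono (natCast_add_one_le_of_eq_mul_exp_one_div h0.ge hrec)
      (tendsto_atTop_add_const_right _ 1 tendsto_natCast_atTop_atTop)
  have hincr : Tendsto (fun k => x (k + 1) - x k) atTop (𝓝 1) := by
    simpa only [hrec, Function.comp_def] using tendsto_mul_exp_one_div_sub_self.comp hx
  exact hincr.div_natCast_of_tendsto_sub
end

section
/- For the sequence x_0 = 1, x_{k+1} = x_k + exp(1/x_k), one has x_k ≥ k + 1 for all k, and x_k / k → 1 as k → ∞. -/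
/-! Since `exp (1 / x) ≥ 1` for `x ≥ 0`, each step adds at least `1`, so `x k ≥ k + 1`. Hence
`x k → ∞`, the increments `exp (1 / x k)` tend to `1`, and by Cesàro averaging of the
increments `x k / k → 1`. -/

open Filter Topology

theorem tendsto_div_natCast_of_tendsto_sub {x : ℕ → ℝ} {l : ℝ}
    (h : Tendsto (fun k => x (k + 1) - x k) atTop (𝓝 l)) :
    Tendsto (fun k : ℕ => x k / k) atTop (𝓝 l) := by
  have hsplit : ∀ n : ℕ,
      x n / n = x 0 * (1 / n) + (n : ℝ)⁻¹ * ∑ i ∈ Finset.range n, (x (i + 1) - x i) := by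
    intro n
    rw [Finset.sum_range_sub]
    ring
  simp_rw [hsplit]
  simpa using (tendsto_one_div_atTop_nhds_zero_nat.const_mul (x 0)).add h.cesaro

section ExpRecursion

variable {x : ℕ → ℝ} (hrec : ∀ k, x (k + 1) = x k + Real.exp (1 / x k))
include hrec

theorem add_natCast_le_of_rec_exp_inv (h0 : 0 ≤ x 0) (k : ℕ) : x 0 + k ≤ x k := by
  induction k with
  | zero => simp
  | succ n ih =>
    have hstep : 1 ≤ Real.exp (1 / x n) :=
      Real.one_le_exp (one_div_nonneg.mpr (by linarith [n.cast_nonneg (α := ℝ)]))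
    rw [hrec]
    push_cast
    linarith

theorem tendsto_div_natCast_of_rec_exp_inv (h0 : 0 ≤ x 0) :
    Tendsto (fun k : ℕ => x k / k) atTop (𝓝 1) := by
  have hx : Tendsto x atTop atTop :=
    tendsto_atTop_mono (add_natCast_le_of_rec_exp_inv hrec h0)
      (tendsto_atTop_add_const_left _ _ tendsto_natCast_atTop_atTop)
  have hinc : Tendsto (fun k => Real.exp (1 / x k)) atTop (𝓝 1) := by
    simpa only [one_div, Real.exp_zero, Function.comp_def, Pi.inv_apply] using
      (Real.continuous_exp.tendsto 0).comp hx.inv_tendsto_atTop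
  refine tendsto_div_natCast_of_tendsto_sub (hinc.congr fun k => ?_)
  rw [hrec]
  ring

end ExpRecursion

theorem stmt_7 (x : ℕ → ℝ)
    (h0 : x 0 = 1)
    (hrec : ∀ k, x (k + 1) = x k + Real.exp (1 / x k)) :
    (∀ k : ℕ, (k : ℝ) + 1 ≤ x k) ∧
      Tendsto (fun k : ℕ => x k / (k : ℝ)) atTop (nhds 1) := by
  have hpos : 0 ≤ x 0 := h0 ▸ zero_le_one
  refine ⟨fun k => ?_, tendsto_div_natCast_of_rec_exp_inv hrec hpos⟩
  simpa [h0, add_comm] using add_natCast_le_of_rec_exp_inv hrec hpos k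
end
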